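/- For any unit vectors q and q̃ in ℝ^p, letting l(q, q̃) = ‖q − sgn(q^T q̃) q̃‖₂² and L(span{q}, span{q̃}) = ‖q q^T − q̃ q̃^T‖² (squared spectral norm of the difference of the rank-one orthogonal projections), one has (1/2) l(q, q̃) ≤ L(span{q}, span{q̃}) ≤ l(q, q̃). -/

import Mathlib

open MeasureTheory ProbabilityTheory Matrix Finset Filter

noncomputable section

namespace SPCA

/-- `h(x) = x² / (x+1)`. -/
def hfun (x : ℝ) : ℝ := x ^ 2 / (x + 1)

/-- The `k`-th largest element (1-indexed) of a finite family of reals; `0` if out of range. -/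
def kthLargest {ι : Type} [Fintype ι] (f : ι → ℝ) (k : ℕ) : ℝ :=
  (((Finset.univ.val.map f).sort (· ≤ ·)).reverse).getD (k - 1) 0

/-- The `j`-th largest eigenvalue (1-indexed) of a real symmetric matrix
(junk value `0` if the matrix is not symmetric). -/
def eigvalK {ι : Type} [Fintype ι] [DecidableEq ι] (M : Matrix ι ι ℝ) (j : ℕ) : ℝ := by
  classical exact if h : M.IsHermitian then kthLargest h.eigenvalues j else 0

/-- Orthogonal projection onto a subspace of `ℝ^p`, as an endomorphism. -/
def projMap {p : ℕ} (U : Submodule ℝ (EuclideanSpace ℝ (Fin p))) :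
    EuclideanSpace ℝ (Fin p) →L[ℝ] EuclideanSpace ℝ (Fin p) :=
  U.subtypeL.comp (U.orthogonalProjectionOnto)

/-- The subspace loss `L(U, V) = ‖P_U − P_V‖²` (squared spectral norm of the
difference of the orthogonal projections). -/
def sLoss {p : ℕ} (U V : Submodule ℝ (EuclideanSpace ℝ (Fin p))) : ℝ :=
  ‖projMap U - projMap V‖ ^ 2

/-- Column span (range) of a `p × m` matrix. -/
def colSpan {p m : ℕ} (Q : Matrix (Fin p) (Fin m) ℝ) :
    Submodule ℝ (EuclideanSpace ℝ (Fin p)) :=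
  Submodule.span ℝ (Set.range fun j : Fin m => (WithLp.toLp 2 (fun ν => Q ν j) : EuclideanSpace ℝ (Fin p)))

/-- Span of the vectors `q 1, …, q m` (1-indexed family). -/
def prinSpan {p : ℕ} (q : ℕ → Fin p → ℝ) (m : ℕ) :
    Submodule ℝ (EuclideanSpace ℝ (Fin p)) :=
  Submodule.span ℝ ((fun j => (WithLp.toLp 2 (q j) : EuclideanSpace ℝ (Fin p))) '' Set.Icc 1 m)

/-- The `j`-th column (1-indexed) of a `p × m` matrix, as a vector in `ℝ^p`. -/
def colVec {p m : ℕ} (Q : Matrix (Fin p) (Fin m) ℝ) (j : ℕ) : Fin p → ℝ :=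
  fun ν => if h : j - 1 < m then Q ν ⟨j - 1, h⟩ else 0

/-- The spiked covariance matrix `Σ = ∑_{j=1}^{m̄} λ_j² q_j q_jᵀ + I`. -/
def spikedCov {p : ℕ} (mbar : ℕ) (lam2 : ℕ → ℝ) (q : ℕ → Fin p → ℝ) :
    Matrix (Fin p) (Fin p) ℝ :=
  (∑ j ∈ Finset.Icc 1 mbar, lam2 j • Matrix.vecMulVec (q j) (q j)) + 1

/-- `p_n = p ∨ n`. -/
def pnn (p n : ℕ) : ℕ := max p n

/-- `τ_{nj} = [log(p_n) / (n h(λ_j²))]^{1/2}`. -/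
def tau (p n : ℕ) (lam2 : ℕ → ℝ) (j : ℕ) : ℝ :=
  Real.sqrt (Real.log (pnn p n) / (n * hfun (lam2 j)))

/-- `M_n = p ∧ ∑_{j=1}^{m̄} s_j^r τ_{nj}^{-r}`. -/
def Mn (p n mbar : ℕ) (r : ℝ) (s lam2 : ℕ → ℝ) : ℝ :=
  min (p : ℝ) (∑ j ∈ Finset.Icc 1 mbar, s j ^ r / tau p n lam2 j ^ r)

/-- `ε_{nj}² = (λ_1²+1)(λ_{j+1}²+1)/(λ_j² − λ_{j+1}²)² · log(p_n)/n`, with the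
convention `ε_{n0}² = 0` (corresponding to `λ_0² = ∞`). -/
def epsSq (p n : ℕ) (lam2 : ℕ → ℝ) (j : ℕ) : ℝ :=
  if j = 0 then 0 else
    (lam2 1 + 1) * (lam2 (j + 1) + 1) / (lam2 j - lam2 (j + 1)) ^ 2 *
      (Real.log (pnn p n) / n)

/-- Membership in the weak-`ℓ_r` ball of radius `s`: the `k`-th largest magnitude is
at most `s k^{-1/r}`. -/
def weakLr {p : ℕ} (r s : ℝ) (u : Fin p → ℝ) : Prop :=
  ∀ k : ℕ, 1 ≤ k → kthLargest (fun ν => |u ν|) k ≤ s * (k : ℝ) ^ (-(1 / r))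

/-- The uniformity class `Θ_n`: `q 1, …, q m̄` are orthonormal and `q j ∈ wℓ_r(s j)`. -/
def inClass {p : ℕ} (mbar : ℕ) (r : ℝ) (s : ℕ → ℝ) (q : ℕ → Fin p → ℝ) : Prop :=
  (∀ j ∈ Finset.Icc 1 mbar, ∀ j' ∈ Finset.Icc 1 mbar,
      ∑ ν, q j ν * q j' ν = if j = j' then 1 else 0) ∧
  ∀ j ∈ Finset.Icc 1 mbar, weakLr r (s j) (q j)

/-- The high-signal set `H(β) = {ν : |q_{νj}| ≥ β τ_{nj} for some 1 ≤ j ≤ m̄}`. -/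
def Hset {p : ℕ} (n mbar : ℕ) (lam2 : ℕ → ℝ) (β : ℝ) (q : ℕ → Fin p → ℝ) :
    Finset (Fin p) := by
  classical
  exact Finset.univ.filter fun ν => ∃ j ∈ Finset.Icc 1 mbar, β * tau p n lam2 j ≤ |q j ν|

/-- The law of a single observation `x = ∑_j λ_j v_j q_j + z` with `v, z` standard
Gaussian: this is `N_p(0, Σ)` for the spiked covariance `Σ`. -/
def obsLaw {p : ℕ} (mbar : ℕ) (lam2 : ℕ → ℝ) (q : ℕ → Fin p → ℝ) :
    Measure (Fin p → ℝ) :=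
  Measure.map
    (fun vz : (Fin mbar → ℝ) × (Fin p → ℝ) =>
      fun ν => (∑ j : Fin mbar, Real.sqrt (lam2 (j + 1)) * vz.1 j * q (j + 1) ν) + vz.2 ν)
    ((Measure.pi fun _ : Fin mbar => gaussianReal 0 1).prod
      (Measure.pi fun _ : Fin p => gaussianReal 0 1))

/-- The joint law of `n` i.i.d. observations from `N_p(0, Σ)`. -/
def sampleLaw (n : ℕ) {p : ℕ} (mbar : ℕ) (lam2 : ℕ → ℝ) (q : ℕ → Fin p → ℝ) :
    Measure (Fin n → Fin p → ℝ) :=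
  Measure.pi fun _ : Fin n => obsLaw mbar lam2 q

/-- Sample covariance matrix `S = n⁻¹ ∑ x_i x_iᵀ`. -/
def sampleCov {n p : ℕ} (x : Fin n → Fin p → ℝ) : Matrix (Fin p) (Fin p) ℝ :=
  (n : ℝ)⁻¹ • ∑ i, Matrix.vecMulVec (x i) (x i)

/-- `α_n = α √(log(p_n)/n)`. -/
def alphaN (α : ℝ) (p n : ℕ) : ℝ := α * Real.sqrt (Real.log (pnn p n) / n)

/-- The set `B = {ν : S_{νν} ≥ 1 + α_n}` selected by diagonal thresholding. -/
def Bset {p : ℕ} (S : Matrix (Fin p) (Fin p) ℝ) (αn : ℝ) : Finset (Fin p) := by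
  classical exact Finset.univ.filter fun ν => 1 + αn ≤ S ν ν

/-- The submatrix `S_{BB}`. -/
def subCov {p : ℕ} (S : Matrix (Fin p) (Fin p) ℝ) (B : Finset (Fin p)) :
    Matrix {ν // ν ∈ B} {ν // ν ∈ B} ℝ :=
  Matrix.submatrix S Subtype.val Subtype.val

/-- `ℓ_j^B = λ_j(S_{BB}) ∨ 1`. -/
def ellB {p : ℕ} (S : Matrix (Fin p) (Fin p) ℝ) (B : Finset (Fin p)) (j : ℕ) : ℝ :=
  max (eigvalK (subCov S B) j) 1

/-- Threshold levels `γ_{nj} = γ √( (λ_j(S_BB) ∨ 1) log(p_n)/n )` of ITSPCA. -/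
def gammaN {p : ℕ} (n : ℕ) (α γ : ℝ) (S : Matrix (Fin p) (Fin p) ℝ) : ℕ → ℝ :=
  fun j => γ * Real.sqrt (ellB S (Bset S (alphaN α p n)) j * Real.log (pnn p n) / n)

/-- The stopping time `K*` of ITSPCA (a real number; the algorithm is stopped after
`⌈K*⌉` iterations). -/
def Kstar {p : ℕ} (n : ℕ) (α : ℝ) (S : Matrix (Fin p) (Fin p) ℝ) (m : ℕ) : ℝ :=
  1.1 * ellB S (Bset S (alphaN α p n)) 1 /
      (ellB S (Bset S (alphaN α p n)) m - ellB S (Bset S (alphaN α p n)) (m + 1)) *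
    ((1 + 1 / Real.log 2) * Real.log n +
      max 0 (Real.log (hfun (ellB S (Bset S (alphaN α p n)) 1 - 1))))

/-- The theoretical iteration count
`K = ((λ_1²+1)/(λ_m² − λ_{m+1}²)) [(1 + 1/log 2) log n + 0 ∨ log h(λ_1²)]`. -/
def Kthry (n : ℕ) (lam2 : ℕ → ℝ) (m : ℕ) : ℝ :=
  (lam2 1 + 1) / (lam2 m - lam2 (m + 1)) *
    ((1 + 1 / Real.log 2) * Real.log n + max 0 (Real.log (hfun (lam2 1))))

/-- A valid thresholding function: `|η(t,γ) − t| ≤ γ` and `η(t,γ) 1{|t| ≤ γ} = 0`. -/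
def ThresholdFun (η : ℝ → ℝ → ℝ) : Prop :=
  ∀ t γ : ℝ, 0 < γ → |η t γ - t| ≤ γ ∧ (|t| ≤ γ → η t γ = 0)

/-- A run of the reduced-PCA/zero-padding steps of DTSPCA on `S` with feature set `B`:
`w j` (for `j < card B`) are orthonormal eigenvectors of `S_{BB}` for its `j`-th largest
eigenvalue, and `w j = 0` for `j ≥ card B`. -/
structure DTRunOn {p : ℕ} (S : Matrix (Fin p) (Fin p) ℝ) (B : Finset (Fin p)) (m : ℕ) where
  w : Fin m → ({ν // ν ∈ B} → ℝ)
  w_eig : ∀ j : Fin m, (j : ℕ) < B.card →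
    (subCov S B) *ᵥ (w j) = eigvalK (subCov S B) ((j : ℕ) + 1) • w j
  w_norm : ∀ j : Fin m, (j : ℕ) < B.card → ∑ ν, (w j ν) ^ 2 = 1
  w_orth : ∀ j j' : Fin m, j ≠ j' → ∑ ν, w j ν * w j' ν = 0
  w_zero : ∀ j : Fin m, B.card ≤ (j : ℕ) → w j = 0

/-- The zero-padded initial orthonormal matrix `Q̂⁽⁰⁾` produced by DTSPCA. -/
def DTRunOn.Q0 {p m : ℕ} {S : Matrix (Fin p) (Fin p) ℝ} {B : Finset (Fin p)}
    (dt : DTRunOn S B m) : Matrix (Fin p) (Fin m) ℝ := by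
  classical exact Matrix.of fun ν j => if h : ν ∈ B then dt.w j ⟨ν, h⟩ else 0

/-- Entrywise thresholding of a `p × m` matrix at levels `γs 1, …, γs m` (columnwise). -/
def thMat {p m : ℕ} (η : ℝ → ℝ → ℝ) (γs : ℕ → ℝ) (T : Matrix (Fin p) (Fin m) ℝ) :
    Matrix (Fin p) (Fin m) ℝ :=
  Matrix.of fun ν j => η (T ν j) (γs ((j : ℕ) + 1))

/-- A run of the ITSPCA iteration on the matrix `S`, with thresholding function `η`,
threshold levels `γs`, and initial matrix `Q0`: at each step,
`Q^{(k+1)} R^{(k+1)} = η(S Q^{(k)}, γ)` is a QR factorization (with orthonormal `Q`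
whenever the thresholded matrix has full column rank). -/
structure ITRun {p m : ℕ} (S : Matrix (Fin p) (Fin p) ℝ) (η : ℝ → ℝ → ℝ)
    (γs : ℕ → ℝ) (Q0 : Matrix (Fin p) (Fin m) ℝ) where
  Q : ℕ → Matrix (Fin p) (Fin m) ℝ
  R : ℕ → Matrix (Fin m) (Fin m) ℝ
  q_init : Q 0 = Q0
  qr : ∀ k : ℕ, Q (k + 1) * R (k + 1) = thMat η γs (S * Q k)
  r_tri : ∀ k : ℕ, ∀ i j : Fin m, (j : ℕ) < (i : ℕ) → R (k + 1) i j = 0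
  r_diag : ∀ k : ℕ, ∀ i : Fin m, 0 ≤ R (k + 1) i i
  q_orth : ∀ k : ℕ, (thMat η γs (S * Q k)).rank = m → (Q (k + 1))ᵀ * Q (k + 1) = 1

/-- A (1-indexed) family `v 1, …, v mm` of orthonormal leading eigenvectors of `M`:
`v j` is a unit eigenvector for the `j`-th largest eigenvalue. -/
def IsLeadingEigvecs {p : ℕ} (M : Matrix (Fin p) (Fin p) ℝ) (mm : ℕ)
    (v : ℕ → Fin p → ℝ) : Prop :=
  (∀ j, 1 ≤ j → j ≤ mm → M *ᵥ v j = eigvalK M j • v j ∧ ∑ ν, (v j ν) ^ 2 = 1) ∧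
  ∀ j j', 1 ≤ j → j ≤ mm → 1 ≤ j' → j' ≤ mm → j ≠ j' → ∑ ν, v j ν * v j' ν = 0

/-- The oracle version of a matrix: equal to `M` on the `H × H` block, to the identity
on the `Hᶜ × Hᶜ` block, and zero on the off-diagonal blocks. -/
def oracleMat {p : ℕ} (M : Matrix (Fin p) (Fin p) ℝ) (H : Finset (Fin p)) :
    Matrix (Fin p) (Fin p) ℝ := by
  classical
  exact Matrix.of fun ν μ => if ν ∈ H ∧ μ ∈ H then M ν μ else if ν = μ then 1 else 0

/-- `t_k² = 6 log(p_n)/n + 2k(log p_n + 1)/n`. -/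
def tkSq (p n k : ℕ) : ℝ :=
  6 * Real.log (pnn p n) / n + 2 * k * (Real.log (pnn p n) + 1) / n

/-- `δ_k = 2(√(k/n) + t_k) + (√(k/n) + t_k)²`. -/
def deltaK (p n k : ℕ) : ℝ :=
  2 * (Real.sqrt (k / n) + Real.sqrt (tkSq p n k)) +
    (Real.sqrt (k / n) + Real.sqrt (tkSq p n k)) ^ 2

/-- The estimator `m̂ = max{j ≥ 1 : ℓ_j^B > 1 + δ_{card B}}` of the number of spikes. -/
def mhat {p : ℕ} (n : ℕ) (S : Matrix (Fin p) (Fin p) ℝ) (α : ℝ) : ℕ :=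
  sSup {j : ℕ | 1 ≤ j ∧
    1 + deltaK p n (Bset S (alphaN α p n)).card < ellB S (Bset S (alphaN α p n)) j}

/-- Basic structure of the spike sequences: positive and nonincreasing on `[1, m̄]`,
zero beyond `m̄`. -/
def SpikeOK (mbar : ℕ) (lam2 : ℕ → ℕ → ℝ) : Prop :=
  ∀ n, (∀ j ∈ Finset.Icc 1 mbar, 0 < lam2 n j) ∧
    (∀ j j' : ℕ, 1 ≤ j → j ≤ j' → j' ≤ mbar → lam2 n j' ≤ lam2 n j) ∧
    (∀ j, mbar < j → lam2 n j = 0)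

/-- Condition GR (growth rates). -/
def CondGR (mbar : ℕ) (r : ℝ) (p : ℕ → ℕ) (lam2 : ℕ → ℕ → ℝ) : Prop :=
  Tendsto (fun n => Real.log (p n) / n) atTop (nhds 0) ∧
  (∃ C : ℝ, ∀ᶠ n in atTop, lam2 n 1 ≤ C * pnn (p n) n) ∧
  Tendsto (fun n => Real.log (pnn (p n) n) / (n * lam2 n mbar ^ 2)) atTop (nhds 0) ∧
  (∃ C : ℝ, ∀ᶠ n in atTop,
    lam2 n 1 / lam2 n mbar ≤
      C * (n * (Real.log (pnn (p n) n) / n) ^ ((1 : ℝ) / 2 + r / 4))) ∧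
  ∀ j ∈ Finset.Icc 1 mbar, ∃ Λ : ENNReal, 1 ≤ Λ ∧
    Tendsto (fun n => ENNReal.ofReal (lam2 n 1 / (lam2 n j - lam2 n (j + 1))))
      atTop (nhds Λ)

/-- Condition SP (sparsity). -/
def CondSP (mbar : ℕ) (r : ℝ) (p : ℕ → ℕ) (lam2 s : ℕ → ℕ → ℝ) : Prop :=
  ∀ j ∈ Finset.Icc 1 mbar, (∀ n, 1 ≤ s n j) ∧
    Tendsto (fun n =>
        s n j ^ r * (Real.log (pnn (p n) n) / (n * lam2 n j ^ 2)) ^ ((1 : ℝ) / 2 - r / 4)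
          / min 1 (lam2 n 1 ^ 2))
      atTop (nhds 0)

/-- Condition AD(m, κ): `λ_m² − λ_{m+1}² ≥ λ_1²/κ` for sufficiently large `n`. -/
def CondAD (m : ℕ) (κ : ℝ) (lam2 : ℕ → ℕ → ℝ) : Prop :=
  ∀ᶠ n in atTop, lam2 n 1 / κ ≤ lam2 n m - lam2 n (m + 1)

end SPCA

namespace SPCA

open RealInnerProductSpace in
private lemma projMap_singleton_apply {p : ℕ} (q : EuclideanSpace ℝ (Fin p)) (hq : ‖q‖ = 1)
    (x : EuclideanSpace ℝ (Fin p)) :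
    projMap (Submodule.span ℝ {q}) x = ⟪q, x⟫ • q := by
  have := Submodule.starProjection_unit_singleton ℝ hq x
  rw [← this]; rfl

set_option maxHeartbeats 1000000 in
open RealInnerProductSpace in
set_option maxHeartbeats 1000000 in
/-- **Equivalence of the eigenvector loss and the subspace loss.** For unit vectors
`q, q̃ ∈ ℝ^p`, with `l(q, q̃) = min_± ‖q ∓ q̃‖₂² = ‖q − sgn(qᵀq̃) q̃‖₂²` and
`L(span{q}, span{q̃})` the squared spectral norm of the difference of the rank-one
orthogonal projections, one has `(1/2) l(q, q̃) ≤ L ≤ l(q, q̃)`. -/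
theorem loss_equivalence (p : ℕ) (q qt : EuclideanSpace ℝ (Fin p))
    (hq : ‖q‖ = 1) (hqt : ‖qt‖ = 1) :
    (1 / 2) * min (‖q - qt‖ ^ 2) (‖q + qt‖ ^ 2) ≤
      sLoss (Submodule.span ℝ {q}) (Submodule.span ℝ {qt}) ∧
    sLoss (Submodule.span ℝ {q}) (Submodule.span ℝ {qt}) ≤
      min (‖q - qt‖ ^ 2) (‖q + qt‖ ^ 2) := by
  set c : ℝ := ⟪q, qt⟫ with hc
  have hqq : ⟪q, q⟫ = (1 : ℝ) := by rw [real_inner_self_eq_norm_sq, hq]; norm_num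
  have hqtqt : ⟪qt, qt⟫ = (1 : ℝ) := by rw [real_inner_self_eq_norm_sq, hqt]; norm_num
  have hcle : |c| ≤ 1 := by simpa [hq, hqt] using abs_real_inner_le_norm q qt
  have h1 : ‖q - qt‖ ^ 2 = 2 - 2 * c := by
    rw [norm_sub_sq_real, hq, hqt]; ring
  have h2 : ‖q + qt‖ ^ 2 = 2 + 2 * c := by
    rw [norm_add_sq_real, hq, hqt]; ring
  have hmin : min (‖q - qt‖ ^ 2) (‖q + qt‖ ^ 2) = 2 - 2 * |c| := by
    rcases abs_cases c with ⟨h, h'⟩ | ⟨h, h'⟩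
    · rw [h1, h2, h, min_eq_left (by linarith)]
    · rw [h1, h2, h, min_eq_right (by linarith)]; ring
  have hqtq : ⟪qt, q⟫ = c := by rw [real_inner_comm]
  rcases eq_or_lt_of_le hcle with hdeg | hlt
  · -- degenerate case |c| = 1 : qt = ± q
    have hdeg' : |c| = 1 := hdeg
    have hspan : Submodule.span ℝ {qt} = Submodule.span ℝ {q} := by
      rcases (abs_eq (by norm_num : (0:ℝ) ≤ 1)).mp hdeg' with h | h
      · have : q = qt := (inner_eq_one_iff_of_norm_eq_one hq hqt).mp (by rw [← hc, h])
        rw [this]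
      · have hq' : q = -qt := by
          have : ⟪q, -qt⟫ = (1 : ℝ) := by rw [inner_neg_right, ← hc, h]; ring
          exact (inner_eq_one_iff_of_norm_eq_one hq (by rw [norm_neg, hqt])).mp this
        have hqt' : qt = (-1 : ℝ) • q := by rw [hq']; simp
        rw [hqt']
        exact Submodule.span_singleton_smul_eq (isUnit_iff_ne_zero.mpr (by norm_num)) q
    have hL : sLoss (Submodule.span ℝ {q}) (Submodule.span ℝ {qt}) = 0 := by
      rw [sLoss, hspan, sub_self, norm_zero]; ring
    rw [hL, hmin, hdeg']
    norm_num
  · -- main case |c| < 1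
    set A := projMap (Submodule.span ℝ {q}) - projMap (Submodule.span ℝ {qt}) with hAdef
    have hA : ∀ x, A x = ⟪q, x⟫ • q - ⟪qt, x⟫ • qt := by
      intro x
      rw [hAdef, ContinuousLinearMap.sub_apply, projMap_singleton_apply q hq,
        projMap_singleton_apply qt hqt]
    have hc2 : c ^ 2 < 1 := by
      have := sq_abs c; nlinarith [abs_nonneg c]
    have hAx : ∀ x, ‖A x‖ ^ 2 = ⟪q, x⟫ ^ 2 + ⟪qt, x⟫ ^ 2 - 2 * ⟪q, x⟫ * ⟪qt, x⟫ * c := by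
      intro x
      rw [← real_inner_self_eq_norm_sq, hA x]
      simp only [inner_sub_left, inner_sub_right, real_inner_smul_left, real_inner_smul_right,
        hqq, hqtqt, hqtq]
      ring
    have hkey : ∀ x : EuclideanSpace ℝ (Fin p),
        ⟪q, x⟫ ^ 2 + ⟪qt, x⟫ ^ 2 - 2 * ⟪q, x⟫ * ⟪qt, x⟫ * c ≤ (1 - c ^ 2) * ‖x‖ ^ 2 := by
      intro x
      set a : ℝ := ⟪q, x⟫ with ha
      set b : ℝ := ⟪qt, x⟫ with hb
      have hxq : ⟪x, q⟫ = a := by rw [real_inner_comm]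
      have hxqt : ⟪x, qt⟫ = b := by rw [real_inner_comm]
      have hD : (0:ℝ) < 1 - c ^ 2 := by linarith
      have h0 : (0:ℝ) ≤ ‖(1 - c ^ 2) • x - ((a - b * c) • q + (b - a * c) • qt)‖ ^ 2 :=
        sq_nonneg _
      rw [← real_inner_self_eq_norm_sq] at h0
      simp only [inner_sub_left, inner_sub_right, inner_add_left, inner_add_right,
        real_inner_smul_left, real_inner_smul_right, hqq, hqtqt,
        hqtq, hxq, hxqt, ← ha, ← hb] at h0
      rw [real_inner_self_eq_norm_sq] at h0
      have h3 : (1 - c ^ 2) * (a ^ 2 + b ^ 2 - 2 * a * b * c)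
          ≤ (1 - c ^ 2) * ((1 - c ^ 2) * ‖x‖ ^ 2) := by nlinarith [h0]
      exact (mul_le_mul_iff_right₀ hD).mp h3
    constructor
    · -- lower bound
      have hAx0 : ‖A (q - qt)‖ ^ 2 = (1 - c) ^ 2 * (2 + 2 * c) := by
        rw [hAx (q - qt)]
        simp only [inner_sub_right, hqq, hqtqt, hqtq, ← hc]
        ring
      have hle : ‖A (q - qt)‖ ≤ ‖A‖ * ‖q - qt‖ := A.le_opNorm _
      have hle2 : ‖A (q - qt)‖ ^ 2 ≤ ‖A‖ ^ 2 * ‖q - qt‖ ^ 2 := by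
        calc ‖A (q - qt)‖ ^ 2 ≤ (‖A‖ * ‖q - qt‖) ^ 2 :=
              pow_le_pow_left₀ (norm_nonneg _) hle 2
          _ = ‖A‖ ^ 2 * ‖q - qt‖ ^ 2 := by ring
      rw [hAx0, h1] at hle2
      have hsL : sLoss (Submodule.span ℝ {q}) (Submodule.span ℝ {qt}) = ‖A‖ ^ 2 := by
        unfold sLoss; rw [← hAdef]
      rw [hsL, hmin]
      set N := ‖A‖ ^ 2 with hN
      have hca : c ≤ |c| := le_abs_self c
      have hpos : (0:ℝ) < 2 - 2 * c := by linarith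
      have h4 : (2 - 2 * c) * (1 - c ^ 2) ≤ (2 - 2 * c) * N := by nlinarith [hle2]
      have h5 : 1 - c ^ 2 ≤ N := (mul_le_mul_iff_right₀ hpos).mp h4
      have h6 : (0:ℝ) ≤ |c| * (1 - |c|) := mul_nonneg (abs_nonneg c) (by linarith)
      nlinarith [h5, h6, sq_abs c]
    · -- upper bound
      have hnormA : ‖A‖ ≤ Real.sqrt (1 - c ^ 2) := by
        apply A.opNorm_le_bound (Real.sqrt_nonneg _)
        intro x
        have h1' : ‖A x‖ ^ 2 ≤ (1 - c ^ 2) * ‖x‖ ^ 2 := by rw [hAx x]; exact hkey x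
        rw [show ‖A x‖ = Real.sqrt (‖A x‖ ^ 2) from (Real.sqrt_sq (norm_nonneg _)).symm]
        calc Real.sqrt (‖A x‖ ^ 2) ≤ Real.sqrt ((1 - c ^ 2) * ‖x‖ ^ 2) :=
              Real.sqrt_le_sqrt h1'
          _ = Real.sqrt (1 - c ^ 2) * ‖x‖ := by
              rw [Real.sqrt_mul (by nlinarith) _, Real.sqrt_sq (norm_nonneg _)]
      have hsL : sLoss (Submodule.span ℝ {q}) (Submodule.span ℝ {qt}) = ‖A‖ ^ 2 := by
        unfold sLoss; rw [← hAdef]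
      rw [hsL, hmin]
      have hA2 : ‖A‖ ^ 2 ≤ 1 - c ^ 2 := by
        calc ‖A‖ ^ 2 ≤ Real.sqrt (1 - c ^ 2) ^ 2 := pow_le_pow_left₀ (norm_nonneg _) hnormA 2
          _ = 1 - c ^ 2 := Real.sq_sqrt (by nlinarith)
      have key2 : 1 - c ^ 2 ≤ 2 - 2 * |c| := by nlinarith [sq_abs c, sq_nonneg (1 - |c|)]
      linarith [hA2, key2]

end SPCA
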